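/- Let θ < 0, ρ < 0, and let U : [0,∞) → ℝ³ solve the linear ODE U'(t) = C U(t) + I with U(0) = 0, where C = [[2(θ+ρ), 0, -2θρ],[0, 0, 2],[1, -θρ, θ+ρ]] and I = (1,0,0). Then U(t) converges as t → ∞ to -C⁻¹ I, whose components are (-1/(2(θ+ρ)), -1/(2θρ(θ+ρ)), 0). -/

import Mathlib

/-!
Subtracting the equilibrium `w = -C⁻¹ I` turns the equation into the homogeneous one
`V' = C V`. In the coordinates `p = V₀ + ρ² V₁ - 2ρ V₂`, `s = V₂ - ρ V₁` and `V₁` this system is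
lower triangular with diagonal `2θ, θ + ρ, 2ρ`, all negative, whether or not `θ = ρ`. So each
coordinate obeys `f' = l f + g` with `l < 0` and a forcing term `g` already known to tend to `0`,
and a Gronwall estimate shows that then `f → 0`.
-/

open Matrix Filter Topology Real

theorem le_gronwallBound_of_hasDerivAt_eq_mul_add {f g : ℝ → ℝ} {l ε a : ℝ}
    (hf : ∀ t ≥ a, HasDerivAt f (l * f t + g t) t) (hg : ∀ t ≥ a, g t ≤ ε) {t : ℝ}
    (ht : a ≤ t) : f t ≤ gronwallBound (f a) l ε (t - a) :=
  le_gronwallBound_of_liminf_deriv_right_le (f' := fun t => l * f t + g t)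
    (fun x hx => (hf x hx.1).continuousAt.continuousWithinAt)
    (fun x hx _ hr => by simpa [slope_def_field, div_eq_inv_mul] using
      (hf x hx.1).hasDerivWithinAt.liminf_right_slope_le hr)
    le_rfl (fun x hx => by linarith [hg x hx.1]) t ⟨ht, le_rfl⟩

theorem abs_le_of_hasDerivAt_eq_mul_add {f g : ℝ → ℝ} {l ε a : ℝ} (hl : l < 0) (hε : 0 ≤ ε)
    (hf : ∀ t ≥ a, HasDerivAt f (l * f t + g t) t) (hg : ∀ t ≥ a, |g t| ≤ ε) {t : ℝ}
    (ht : a ≤ t) : |f t| ≤ |f a| * exp (l * (t - a)) + ε / -l := by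
  have hc : 0 ≤ ε / -l := div_nonneg hε (by linarith)
  have hdrift : ε / l * (exp (l * (t - a)) - 1) = ε / -l * (1 - exp (l * (t - a))) := by
    rw [div_neg]; ring
  have hup := le_gronwallBound_of_hasDerivAt_eq_mul_add hf
    (fun s hs => (le_abs_self _).trans (hg s hs)) ht
  have hdown := le_gronwallBound_of_hasDerivAt_eq_mul_add (f := -f) (g := -g) (l := l)
    (fun s hs => (hf s hs).neg.congr_deriv (by simp only [Pi.neg_apply]; ring))
    (fun s hs => (neg_le_abs _).trans (hg s hs)) ht
  rw [gronwallBound_of_K_ne_0 hl.ne] at hup hdown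
  simp only [Pi.neg_apply, hdrift] at hup hdown
  rw [abs_le]
  constructor <;> nlinarith [neg_abs_le (f a), le_abs_self (f a), exp_pos (l * (t - a))]

theorem tendsto_zero_of_hasDerivAt_eq_mul_add {f g : ℝ → ℝ} {l : ℝ} (hl : l < 0)
    (hf : ∀ᶠ t in atTop, HasDerivAt f (l * f t + g t) t) (hg : Tendsto g atTop (𝓝 0)) :
    Tendsto f atTop (𝓝 0) := by
  rw [Metric.tendsto_nhds] at hg ⊢
  intro ε hε
  have hl' : 0 < -l := neg_pos.2 hl
  obtain ⟨a, ha⟩ := eventually_atTop.1 (hf.and (hg (ε * -l / 2) (by positivity)))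
  have hdecay : Tendsto (fun t => |f a| * exp (l * (t - a))) atTop (𝓝 0) := by
    simpa [sub_eq_add_neg] using (tendsto_exp_atBot.comp
      ((tendsto_atTop_add_const_right _ (-a) tendsto_id).const_mul_atTop_of_neg hl)).const_mul
      |f a|
  filter_upwards [eventually_ge_atTop a, Metric.tendsto_nhds.1 hdecay (ε / 2) (half_pos hε)]
    with t ht hsmall
  have hbound := abs_le_of_hasDerivAt_eq_mul_add (ε := ε * -l / 2) hl (by positivity)
    (fun s hs => (ha s hs).1) (fun s hs => by simpa using ((ha s hs).2).le) ht
  rw [Real.dist_eq, sub_zero, abs_of_nonneg (by positivity)] at hsmall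
  rw [Real.dist_eq, sub_zero]
  have hhalf : ε * -l / 2 / -l = ε / 2 := by field_simp [hl.ne]
  linarith

/-- The coefficient matrix of the equations for the second moments `(E y'², E y², E y y')` of
`y'' = (θ + ρ) y' - θ ρ y + ξ` with unit white noise `ξ`; its eigenvalues are `2θ, θ + ρ, 2ρ`. -/
def momentMatrix (θ ρ : ℝ) : Matrix (Fin 3) (Fin 3) ℝ :=
  !![2 * (θ + ρ), 0, -2 * θ * ρ; 0, 0, 2; 1, -(θ * ρ), θ + ρ]

theorem momentMatrix_mulVec (θ ρ : ℝ) (v : Fin 3 → ℝ) :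
    momentMatrix θ ρ *ᵥ v =
      ![2 * (θ + ρ) * v 0 - 2 * θ * ρ * v 2, 2 * v 2, v 0 - θ * ρ * v 1 + (θ + ρ) * v 2] := by
  ext i
  fin_cases i <;> simp [momentMatrix, mulVec, dotProduct, Fin.sum_univ_three] <;> ring

theorem det_momentMatrix (θ ρ : ℝ) : (momentMatrix θ ρ).det = 4 * θ * ρ * (θ + ρ) := by
  simp [momentMatrix, det_fin_three]
  ring

theorem tendsto_zero_of_hasDerivAt_momentMatrix_mulVec {θ ρ : ℝ} (hθ : θ < 0) (hρ : ρ < 0)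
    {V : ℝ → Fin 3 → ℝ} (hV : ∀ᶠ t in atTop, HasDerivAt V (momentMatrix θ ρ *ᵥ V t) t) :
    Tendsto V atTop (𝓝 0) := by
  have hcoord : ∀ᶠ t in atTop,
      HasDerivAt (fun t => V t 0) (2 * (θ + ρ) * V t 0 - 2 * θ * ρ * V t 2) t ∧
      HasDerivAt (fun t => V t 1) (2 * V t 2) t ∧
      HasDerivAt (fun t => V t 2) (V t 0 - θ * ρ * V t 1 + (θ + ρ) * V t 2) t := by
    filter_upwards [hV] with t ht
    rw [momentMatrix_mulVec] at ht
    exact ⟨hasDerivAt_pi.1 ht 0, hasDerivAt_pi.1 ht 1, hasDerivAt_pi.1 ht 2⟩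
  have hp : Tendsto (fun t => V t 0 + ρ ^ 2 * V t 1 - 2 * ρ * V t 2) atTop (𝓝 0) := by
    refine tendsto_zero_of_hasDerivAt_eq_mul_add (g := fun _ => 0) (by linarith : 2 * θ < 0) ?_
      tendsto_const_nhds
    filter_upwards [hcoord] with t ⟨h0, h1, h2⟩
    exact ((h0.add (h1.const_mul (ρ ^ 2))).sub (h2.const_mul (2 * ρ))).congr_deriv (by ring)
  have hs : Tendsto (fun t => V t 2 - ρ * V t 1) atTop (𝓝 0) := by
    refine tendsto_zero_of_hasDerivAt_eq_mul_add (by linarith : θ + ρ < 0) ?_ hp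
    filter_upwards [hcoord] with t ⟨_, h1, h2⟩
    exact (h2.sub (h1.const_mul ρ)).congr_deriv (by ring)
  have h1 : Tendsto (fun t => V t 1) atTop (𝓝 0) := by
    refine tendsto_zero_of_hasDerivAt_eq_mul_add (by linarith : 2 * ρ < 0) ?_
      (by simpa using hs.const_mul 2)
    filter_upwards [hcoord] with t ⟨_, h1, _⟩
    exact h1.congr_deriv (by ring)
  have h0 : Tendsto (fun t => V t 0) atTop (𝓝 0) := by
    have := (hp.add (h1.const_mul (ρ ^ 2))).add (hs.const_mul (2 * ρ))
    simp only [mul_zero, add_zero] at this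
    exact this.congr fun t => by ring
  have h2 : Tendsto (fun t => V t 2) atTop (𝓝 0) := by
    have := hs.add (h1.const_mul ρ)
    simp only [mul_zero, add_zero] at this
    exact this.congr fun t => by ring
  rw [tendsto_pi_nhds]
  intro i
  fin_cases i
  exacts [h0, h1, h2]

theorem stmt2_general (θ ρ : ℝ) (hθ : θ < 0) (hρ : ρ < 0)
    (C : Matrix (Fin 3) (Fin 3) ℝ)
    (hC : C = !![2 * (θ + ρ), 0, -2 * θ * ρ; 0, 0, 2; 1, -(θ * ρ), θ + ρ])
    (I : Fin 3 → ℝ) (hI : I = ![1, 0, 0])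
    (U : ℝ → Fin 3 → ℝ)
    (hode : ∀ t : ℝ, 0 ≤ t → HasDerivAt U (C.mulVec (U t) + I) t) :
    Tendsto U atTop (nhds (-(C⁻¹.mulVec I))) ∧
      -(C⁻¹.mulVec I) = ![-1 / (2 * (θ + ρ)), -1 / (2 * θ * ρ * (θ + ρ)), 0] := by
  change C = momentMatrix θ ρ at hC
  subst hC hI
  set w : Fin 3 → ℝ := ![-1 / (2 * (θ + ρ)), -1 / (2 * θ * ρ * (θ + ρ)), 0]
  have hθ0 : θ ≠ 0 := hθ.ne
  have hρ0 : ρ ≠ 0 := hρ.ne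
  have hθρ : θ + ρ ≠ 0 := by linarith
  have hw : momentMatrix θ ρ *ᵥ (-w) = ![1, 0, 0] := by
    rw [momentMatrix_mulVec]
    ext i
    fin_cases i <;> simp [w, field]
  have : Invertible (momentMatrix θ ρ) := invertibleOfIsUnitDet _ <| by
    rw [det_momentMatrix, isUnit_iff_ne_zero]
    exact (mul_neg_of_pos_of_neg (by nlinarith) (by linarith)).ne
  have hlim : -((momentMatrix θ ρ)⁻¹ *ᵥ ![1, 0, 0]) = w := by
    rw [inv_mulVec_eq_vec hw.symm, neg_neg]
  refine ⟨?_, hlim⟩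
  rw [hlim]
  have hV := tendsto_zero_of_hasDerivAt_momentMatrix_mulVec hθ hρ (V := fun t => U t - w) <| by
    filter_upwards [eventually_ge_atTop 0] with t ht
    refine ((hode t ht).sub_const w).congr_deriv ?_
    rw [mulVec_sub, ← hw, mulVec_neg]
    abel
  simpa using hV.add_const w

theorem stmt2 (θ ρ : ℝ) (hθ : θ < 0) (hρ : ρ < 0)
    (C : Matrix (Fin 3) (Fin 3) ℝ)
    (hC : C = !![2 * (θ + ρ), 0, -2 * θ * ρ; 0, 0, 2; 1, -(θ * ρ), θ + ρ])
    (I : Fin 3 → ℝ) (hI : I = ![1, 0, 0])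
    (U : ℝ → Fin 3 → ℝ) (hU0 : U 0 = 0)
    (hode : ∀ t : ℝ, 0 ≤ t → HasDerivAt U (C.mulVec (U t) + I) t) :
    Tendsto U atTop (nhds (-(C⁻¹.mulVec I))) ∧
      -(C⁻¹.mulVec I) = ![-1 / (2 * (θ + ρ)), -1 / (2 * θ * ρ * (θ + ρ)), 0] :=
  stmt2_general θ ρ hθ hρ C hC I hI U hode
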